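/- Let G¹,...,G^d be antisymmetric 2d×2d matrices each of rank-2 form G^r_{kl} = b^r_k a^r_l - a^r_k b^r_l. Then the alternating sum Σ_{σ∈S_{2d}} sgn(σ) Π_{p=1}^d G^{r_p}_{σ(2p-1)σ(2p)}, summed over all d-tuples (r_1,...,r_d) ∈ {1,...,d}^d weighted by arbitrary coefficients c_{r_1}⋯c_{r_d}, equals the same sum restricted to tuples with pairwise distinct indices (r_1,...,r_d). -/

import Mathlib

/-!
Fix a tuple `r` with `r p = r q` for some `p ≠ q`. Expanding the two factors `G^{r_p}` and
`G^{r_q}` of the summand gives four monomials, each containing a product `x (σ s) * x (σ t)` of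
two equal vectors at two distinct slots `s`, `t`; composing `σ` with the transposition of `s`
and `t` fixes such a monomial but flips the sign, so its alternating sum vanishes. Hence only
injective tuples contribute.
-/

open Equiv Finset Function

def wedge {α R : Type*} [CommRing R] (x y : α → R) (u v : α) : R := x u * y v - y u * x v

section

variable {α : Type*} [DecidableEq α]

theorem Equiv.Perm.mul_swap_apply_of_ne_of_ne (σ : Perm α) {u v x : α} (hu : x ≠ u)
    (hv : x ≠ v) : (σ * swap u v) x = σ x := by
  rw [Perm.mul_apply, swap_apply_of_ne_of_ne hu hv]

variable [Fintype α]

theorem Equiv.Perm.sum_sign_smul_eq_zero_of_mul_swap {M : Type*} [AddCommGroup M]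
    (f : Perm α → M) {s t : α} (hst : s ≠ t) (hf : ∀ σ, f (σ * swap s t) = f σ) :
    ∑ σ, (Perm.sign σ : ℤ) • f σ = 0 := by
  refine sum_involution (fun σ _ => σ * swap s t) (fun σ _ => ?_) (fun σ _ _ h => ?_)
    (fun _ _ => mem_univ _) (fun σ _ => by simp [mul_assoc])
  · rw [hf, Perm.sign_mul, Perm.sign_swap hst]; simp
  · exact hst (swap_eq_one_iff.mp (mul_eq_left.mp h))

variable {R : Type*} [CommRing R]

theorem sum_sign_smul_wedge_mul_wedge_mul_eq_zero (x y : α → R) (g : Perm α → R)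
    {i j k l : α} (hij : i ≠ j) (hik : i ≠ k) (hil : i ≠ l) (hjk : j ≠ k) (hjl : j ≠ l)
    (hkl : k ≠ l) (hgk : ∀ σ, g (σ * swap i k) = g σ) (hgl : ∀ σ, g (σ * swap i l) = g σ) :
    ∑ σ : Perm α, (Perm.sign σ : ℤ) •
      (wedge x y (σ i) (σ j) * wedge x y (σ k) (σ l) * g σ) = 0 := by
  have repeated : ∀ (z w : α → R) {s t u v : α}, s ≠ t → u ≠ s → u ≠ t → v ≠ s → v ≠ t →
      (∀ σ, g (σ * swap s t) = g σ) →
      ∑ σ : Perm α, (Perm.sign σ : ℤ) • (z (σ s) * z (σ t) * (w (σ u) * w (σ v) * g σ)) = 0 :=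
    fun z w s t u v hst hus hut hvs hvt hg =>
      Perm.sum_sign_smul_eq_zero_of_mul_swap _ hst fun σ => by
        simp only [σ.mul_swap_apply_of_ne_of_ne hus hut, σ.mul_swap_apply_of_ne_of_ne hvs hvt,
          hg, Perm.mul_apply, swap_apply_left, swap_apply_right]
        ring
  have h₁ := repeated x y hik hij.symm hjk hil.symm hkl.symm hgk
  have h₂ := repeated x y hil hij.symm hjl hik.symm hkl hgl
  have h₃ := repeated y x hil hij.symm hjl hik.symm hkl hgl
  have h₄ := repeated y x hik hij.symm hjk hil.symm hkl.symm hgk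
  calc _ = ∑ σ : Perm α, ((Perm.sign σ : ℤ) • (x (σ i) * x (σ k) * (y (σ j) * y (σ l) * g σ))
        - (Perm.sign σ : ℤ) • (x (σ i) * x (σ l) * (y (σ j) * y (σ k) * g σ))
        - (Perm.sign σ : ℤ) • (y (σ i) * y (σ l) * (x (σ j) * x (σ k) * g σ))
        + (Perm.sign σ : ℤ) • (y (σ i) * y (σ k) * (x (σ j) * x (σ l) * g σ))) := by
        refine sum_congr rfl fun σ _ => ?_
        rw [← smul_sub, ← smul_sub, ← smul_add, wedge, wedge]
        ring
    _ = 0 := by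
      rw [sum_add_distrib, sum_sub_distrib, sum_sub_distrib, h₁, h₂, h₃, h₄]
      abel

theorem sum_sign_smul_prod_eq_zero_of_wedge_repeated {ι : Type*} [Fintype ι] [DecidableEq ι]
    (F : ι → α → α → R) {e : ι ⊕ ι → α} (he : Injective e) {p q : ι} (hpq : p ≠ q)
    (x y : α → R) (hp : F p = wedge x y) (hq : F q = wedge x y) :
    ∑ σ : Perm α, (Perm.sign σ : ℤ) • ∏ m, F m (σ (e (.inl m))) (σ (e (.inr m))) = 0 := by
  set g : Perm α → R :=
    fun σ => ∏ m ∈ (univ.erase p).erase q, F m (σ (e (.inl m))) (σ (e (.inr m)))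
  have hg : ∀ u v : ι ⊕ ι,
      (∀ m, m ≠ p → m ≠ q → u ≠ .inl m ∧ u ≠ .inr m ∧ v ≠ .inl m ∧ v ≠ .inr m) →
      ∀ σ, g (σ * swap (e u) (e v)) = g σ := by
    intro u v huv σ
    refine prod_congr rfl fun m hm => ?_
    obtain ⟨hmq, hmp, -⟩ := mem_erase.mp hm |>.imp_right mem_erase.mp
    obtain ⟨h₁, h₂, h₃, h₄⟩ := huv m hmp hmq
    rw [σ.mul_swap_apply_of_ne_of_ne (he.ne h₁.symm) (he.ne h₃.symm),
      σ.mul_swap_apply_of_ne_of_ne (he.ne h₂.symm) (he.ne h₄.symm)]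
  have hsplit : ∀ σ : Perm α, ∏ m, F m (σ (e (.inl m))) (σ (e (.inr m))) =
      wedge x y (σ (e (.inl p))) (σ (e (.inr p))) *
        wedge x y (σ (e (.inl q))) (σ (e (.inr q))) * g σ := by
    intro σ
    rw [← mul_prod_erase univ _ (mem_univ p), ← mul_prod_erase _ _ (by simpa using hpq.symm),
      hp, hq, mul_assoc]
  simp_rw [hsplit]
  refine sum_sign_smul_wedge_mul_wedge_mul_eq_zero x y g ?_ ?_ ?_ ?_ ?_ ?_ (hg _ _ ?_) (hg _ _ ?_)
    <;> first
      | exact he.ne (by simp [hpq])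
      | (intro m hmp hmq; simp [hmp.symm, hmq.symm])

end

/-- Restriction to distinct indices: for rank-2 antisymmetric matrices
`G^r = b^r ⊗ a^r - a^r ⊗ b^r`, the weighted sum over all index tuples equals
the same sum restricted to tuples of pairwise distinct indices. -/
theorem stmt17 {R : Type*} [CommRing R] {d : ℕ}
    (a b : Fin d → Fin (2 * d) → R) (c : Fin d → R)
    (G : Fin d → Matrix (Fin (2 * d)) (Fin (2 * d)) R)
    (hG : ∀ r k l, G r k l = b r k * a r l - a r k * b r l) :
    ∑ r : Fin d → Fin d,
      (∏ p : Fin d, c (r p)) *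
        ∑ σ : Equiv.Perm (Fin (2 * d)), (Equiv.Perm.sign σ : ℤ) •
          ∏ p : Fin d,
            G (r p) (σ ⟨2 * p, by have := p.isLt; omega⟩)
              (σ ⟨2 * p + 1, by have := p.isLt; omega⟩)
    = ∑ r ∈ Finset.univ.filter (fun r : Fin d → Fin d => Function.Injective r),
        (∏ p : Fin d, c (r p)) *
          ∑ σ : Equiv.Perm (Fin (2 * d)), (Equiv.Perm.sign σ : ℤ) •
            ∏ p : Fin d,
              G (r p) (σ ⟨2 * p, by have := p.isLt; omega⟩)
                (σ ⟨2 * p + 1, by have := p.isLt; omega⟩) := by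
  refine (sum_subset (filter_subset _ _) fun r _ hr => ?_).symm
  obtain ⟨p, q, hrpq, hpq⟩ : ∃ p q, r p = r q ∧ p ≠ q := by
    simpa [Injective] using fun h => hr (mem_filter.mpr ⟨mem_univ r, h⟩)
  have hGwedge : ∀ s, G s = wedge (b s) (a s) := fun s => funext₂ (hG s)
  let slot : Fin d ⊕ Fin d → Fin (2 * d) :=
    Sum.elim (fun p => ⟨2 * p, by omega⟩) (fun p => ⟨2 * p + 1, by omega⟩)
  have hslot : Injective slot := by
    rintro (m | m) (n | n) h <;>
      simp only [slot, Sum.elim_inl, Sum.elim_inr, Fin.ext_iff, Sum.inl.injEq, Sum.inr.injEq,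
        reduceCtorEq] at h ⊢ <;> omega
  exact mul_eq_zero_of_right _ <| sum_sign_smul_prod_eq_zero_of_wedge_repeated
    (fun m => G (r m)) hslot hpq _ _ (hGwedge _) (hrpq ▸ hGwedge _)
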